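/- arXiv:1909.12546 — 2 statements merged into one kernel-verified Lean document; each statement's English description precedes it below -/
import Mathlib

section
/- If ξ_H has at least p_L+1 distinct nodes and I_{L→H} is exact for polynomials of degree p_L, then the adjoint interpolation I_{H→L} = P_L⁻¹ I_{L→H}ᵀ P_H is exact for polynomials of degree at most p_L - 1 whenever P_L and P_H are quadrature norm matrices exact for polynomials of degree at least 2p_L - 1; that is, for every polynomial q of degree ≤ p_L - 1, I_{H→L} q(ξ_H) = q(ξ_L). -/
open Matrix

/-- If the quadrature norms `P_L`, `P_H` are exact for polynomials of degree
`≤ 2p_L - 1`, `ξ_H` has at least `p_L+1` distinct nodes, and `I_{L→H}` is exact for degree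
`p_L`, then `I_{H→L} = P_L⁻¹ I_{L→H}ᵀ P_H` is exact for polynomials of degree `≤ p_L - 1`. -/
theorem adjoint_interpolation_exactness {pL NH : ℕ} (α β : ℝ)
    (ξL : Fin (pL + 1) → ℝ) (ξH : Fin NH → ℝ)
    (wL : Fin (pL + 1) → ℝ) (wH : Fin NH → ℝ)
    (hwL : ∀ i, 0 < wL i) (hwH : ∀ i, 0 < wH i)
    (hdistinct : ∃ f : Fin (pL + 1) → Fin NH, Function.Injective (ξH ∘ f))
    (hquadL : ∀ q : Polynomial ℝ, q.natDegree ≤ 2 * pL - 1 →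
      ∑ i, wL i * q.eval (ξL i) = ∫ x in α..β, q.eval x)
    (hquadH : ∀ q : Polynomial ℝ, q.natDegree ≤ 2 * pL - 1 →
      ∑ i, wH i * q.eval (ξH i) = ∫ x in α..β, q.eval x)
    (ILH : Matrix (Fin NH) (Fin (pL + 1)) ℝ)
    (hILH : ∀ q : Polynomial ℝ, q.natDegree ≤ pL →
      ILH *ᵥ (fun i => q.eval (ξL i)) = fun i => q.eval (ξH i)) :
    ∀ q : Polynomial ℝ, q.natDegree ≤ pL - 1 →
      ((Matrix.diagonal wL)⁻¹ * ILHᵀ * Matrix.diagonal wH) *ᵥ (fun i => q.eval (ξH i))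
        = fun i => q.eval (ξL i) := by
  classical
  -- Step 1: ξL is injective
  have hinjL : Function.Injective ξL := by
    by_contra hni
    obtain ⟨f, hf⟩ := hdistinct
    set s : Finset ℝ := Finset.univ.image ξL with hs
    set p : Polynomial ℝ := ∏ v ∈ s, (Polynomial.X - Polynomial.C v) with hp
    have hmonic : p.Monic :=
      Polynomial.monic_prod_of_monic _ _ fun v _ => Polynomial.monic_X_sub_C v
    have hdeg : p.natDegree = s.card := by
      rw [hp, Polynomial.natDegree_prod _ _ (fun v _ => Polynomial.X_sub_C_ne_zero v)]
      simp
    have hcards : s.card < pL + 1 := by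
      rcases lt_or_eq_of_le (Finset.card_image_le (s := Finset.univ) (f := ξL)) with h | h
      · simpa using h
      · exfalso
        apply hni
        intro a b hab
        have hcard' : (Finset.image ξL Finset.univ).card = (Finset.univ : Finset (Fin (pL+1))).card := by
          simpa using h
        have := (Finset.card_image_iff).mp hcard'
        exact this (Finset.mem_coe.mpr (Finset.mem_univ a)) (Finset.mem_coe.mpr (Finset.mem_univ b)) hab
    have hevalL : (fun i => p.eval (ξL i)) = (0 : Fin (pL+1) → ℝ) := by
      funext i
      rw [hp, Polynomial.eval_prod]
      refine Finset.prod_eq_zero (Finset.mem_image_of_mem ξL (Finset.mem_univ i)) ?_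
      simp
    have hevalH := hILH p (by omega)
    rw [hevalL, Matrix.mulVec_zero] at hevalH
    have hz : p = 0 := by
      refine Polynomial.eq_zero_of_natDegree_lt_card_of_eval_eq_zero p hf (fun m => ?_) ?_
      · exact (congrFun hevalH.symm (f m))
      · simpa [hdeg] using hcards
    exact hmonic.ne_zero hz
  have hinjOn : Set.InjOn ξL ↑(Finset.univ : Finset (Fin (pL+1))) := fun a _ b _ h => hinjL h
  intro q hq
  funext i
  set ℓ := Lagrange.basis Finset.univ ξL i with hℓ
  have hℓdeg : ℓ.natDegree = pL := by
    rw [hℓ, Lagrange.natDegree_basis hinjOn (Finset.mem_univ i)]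
    simp
  have hℓself : ℓ.eval (ξL i) = 1 := Lagrange.eval_basis_self hinjOn (Finset.mem_univ i)
  have hℓne : ∀ j, j ≠ i → ℓ.eval (ξL j) = 0 := fun j hj =>
    Lagrange.eval_basis_of_ne (Ne.symm hj) (Finset.mem_univ j)
  have hentry : ∀ j, ILH j i = ℓ.eval (ξH j) := by
    intro j
    have h := congrFun (hILH ℓ (le_of_eq hℓdeg)) j
    rw [← h]
    simp only [Matrix.mulVec, dotProduct]
    rw [Finset.sum_eq_single i]
    · rw [hℓself, mul_one]
    · intro k _ hk
      rw [hℓne k hk, mul_zero]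
    · simp
  have hmuldeg : (q * ℓ).natDegree ≤ 2 * pL - 1 :=
    le_trans Polynomial.natDegree_mul_le (by omega)
  have hsum : ∑ j, wH j * (q * ℓ).eval (ξH j) = wL i * q.eval (ξL i) := by
    rw [hquadH _ hmuldeg, ← hquadL _ hmuldeg]
    rw [Finset.sum_eq_single i]
    · simp [Polynomial.eval_mul, hℓself]
    · intro k _ hk
      simp [Polynomial.eval_mul, hℓne k hk]
    · simp
  have hinv : (Matrix.diagonal wL)⁻¹ = Matrix.diagonal (fun k => (wL k)⁻¹) := by
    apply Matrix.inv_eq_right_inv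
    rw [Matrix.diagonal_mul_diagonal]
    have : (fun k => wL k * (wL k)⁻¹) = fun _ => (1:ℝ) := by
      funext k; exact mul_inv_cancel₀ (hwL k).ne'
    rw [this, Matrix.diagonal_one]
  rw [hinv]
  show ∑ k, (Matrix.diagonal (fun k => (wL k)⁻¹) * ILHᵀ * Matrix.diagonal wH) i k * q.eval (ξH k)
      = q.eval (ξL i)
  have hcalc : ∀ k, (Matrix.diagonal (fun k => (wL k)⁻¹) * ILHᵀ * Matrix.diagonal wH) i k
      = (wL i)⁻¹ * ILH k i * wH k := by
    intro k
    rw [Matrix.mul_apply]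
    simp [Matrix.mul_apply, Matrix.diagonal_apply, Finset.sum_ite_eq, Finset.mul_sum]
  calc ∑ k, (Matrix.diagonal (fun k => (wL k)⁻¹) * ILHᵀ * Matrix.diagonal wH) i k * q.eval (ξH k)
      = (wL i)⁻¹ * ∑ k, wH k * (q * ℓ).eval (ξH k) := by
        rw [Finset.mul_sum]
        refine Finset.sum_congr rfl fun k _ => ?_
        rw [hcalc k, hentry k, Polynomial.eval_mul]
        ring
    _ = q.eval (ξL i) := by
        rw [hsum, ← mul_assoc, inv_mul_cancel₀ (hwL i).ne', one_mul]
end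

section
/- The split (skew-symmetric) discrete convection operator is norm-dissipation-free up to boundary terms: for M diagonal positive definite, Λ = diag(λ_1, ..., λ_N), and D = M⁻¹Q with Q + Qᵀ = E = diag(-1, 0, ..., 0, 1), the operator A = (1/2)(D Λ + Λ D) satisfies, for all u, uᵀ M A u = (1/2) uᵀ E Λ u = (1/2)(λ_N u_N² - λ_1 u_1²). -/
open Matrix

/-- The split (skew-symmetric) discrete convection operator
`A = (1/2)(DΛ + ΛD)` with `D = M⁻¹Q`, `Q + Qᵀ = E`, `M` diagonal positive definite and `Λ`
diagonal satisfies `uᵀ M A u = (1/2)(λ_N u_N² - λ_1 u_1²)` for all `u`. -/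
theorem split_convection_operator_boundary_only {n : ℕ}
    (w lam : Fin (n + 2) → ℝ) (hw : ∀ i, 0 < w i)
    (Q : Matrix (Fin (n + 2)) (Fin (n + 2)) ℝ)
    (hQ : Q + Qᵀ = vecMulVec (Pi.single (Fin.last (n + 1)) (1 : ℝ)) (Pi.single (Fin.last (n + 1)) 1)
        - vecMulVec (Pi.single 0 (1 : ℝ)) (Pi.single 0 1)) :
    ∀ u : Fin (n + 2) → ℝ,
      u ⬝ᵥ ((Matrix.diagonal w *
          ((1 / 2 : ℝ) • ((Matrix.diagonal w)⁻¹ * Q * Matrix.diagonal lam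
            + Matrix.diagonal lam * ((Matrix.diagonal w)⁻¹ * Q)))) *ᵥ u)
        = (1 / 2) * (lam (Fin.last (n + 1)) * u (Fin.last (n + 1)) ^ 2 - lam 0 * u 0 ^ 2) := by
  intro u
  have hw' : ∀ i, w i ≠ 0 := fun i => (hw i).ne'
  set M := Matrix.diagonal w with hM
  set L := Matrix.diagonal lam with hL
  have hright : M * Matrix.diagonal (fun i => (w i)⁻¹) = 1 := by
    rw [hM, Matrix.diagonal_mul_diagonal]
    have : (fun i => w i * (w i)⁻¹) = fun _ => (1:ℝ) := by
      funext i; exact mul_inv_cancel₀ (hw' i)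
    rw [this, Matrix.diagonal_one]
  have hMinv : M⁻¹ = Matrix.diagonal (fun i => (w i)⁻¹) :=
    Matrix.inv_eq_right_inv hright
  have hMMinv : M * M⁻¹ = 1 := by rw [hMinv]; exact hright
  have hMLMinv : M * (L * M⁻¹) = L := by
    rw [hM, hL, hMinv, Matrix.diagonal_mul_diagonal, Matrix.diagonal_mul_diagonal]
    have : (fun i => w i * (lam i * (w i)⁻¹)) = lam := by
      funext i
      rw [mul_comm (lam i), ← mul_assoc, mul_inv_cancel₀ (hw' i), one_mul]
    rw [this]
  have key : M * ((1 / 2 : ℝ) • (M⁻¹ * Q * L + L * (M⁻¹ * Q))) =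
      (1 / 2 : ℝ) • (Q * L + L * Q) := by
    rw [Matrix.mul_smul, mul_add]
    congr 2
    · rw [show M * (M⁻¹ * Q * L) = (M * M⁻¹) * (Q * L) by noncomm_ring, hMMinv, one_mul]
    · rw [show M * (L * (M⁻¹ * Q)) = (M * (L * M⁻¹)) * Q by noncomm_ring, hMLMinv]
  rw [key]
  have hvL : u ᵥ* L = L *ᵥ u := by
    funext i
    simp [hL, Matrix.vecMul_diagonal, Matrix.mulVec_diagonal, mul_comm]
  have expand : u ⬝ᵥ (((1 / 2 : ℝ) • (Q * L + L * Q)) *ᵥ u)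
      = (1 / 2 : ℝ) * (u ⬝ᵥ ((Q + Qᵀ) *ᵥ (L *ᵥ u))) := by
    rw [Matrix.smul_mulVec, dotProduct_smul, smul_eq_mul]
    congr 1
    rw [Matrix.add_mulVec, dotProduct_add, Matrix.add_mulVec, dotProduct_add]
    congr 1
    · rw [← Matrix.mulVec_mulVec]
    · rw [← Matrix.mulVec_mulVec, Matrix.dotProduct_mulVec, hvL,
        Matrix.dotProduct_mulVec, Matrix.mulVec_transpose, dotProduct_comm]
  rw [expand, hQ]
  have hLu : L *ᵥ u = fun i => lam i * u i := by
    funext i; rw [hL, Matrix.mulVec_diagonal]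
  rw [Matrix.sub_mulVec, dotProduct_sub, hLu]
  have hvv : ∀ (i : Fin (n+2)), u ⬝ᵥ (vecMulVec (Pi.single i (1:ℝ)) (Pi.single i 1)
      *ᵥ fun j => lam j * u j) = lam i * u i ^ 2 := by
    intro i
    have : (vecMulVec (Pi.single i (1:ℝ)) (Pi.single i 1) *ᵥ fun j => lam j * u j)
        = Pi.single i ((Pi.single i (1:ℝ)) ⬝ᵥ fun j => lam j * u j) := by
      funext k
      simp [Matrix.mulVec, dotProduct, Matrix.vecMulVec_apply, Pi.single_apply,
        Finset.sum_ite_eq', ite_mul, Finset.mul_sum]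
    rw [this, dotProduct_single, single_dotProduct]
    ring
  rw [hvv, hvv]
end
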